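/- arXiv:0809.0058 — 2 statements merged into one kernel-verified Lean document; each statement's English description precedes it below -/
import Mathlib

section
/- There is no bounded function g on a punctured disk around 0 such that g(z) - log(|z|²) is holomorphic on the punctured disk. -/
/-!
If `g` were bounded, `f := g - log |z|²` would be holomorphic on the punctured disk and
`O(log |z|) = o(1/z)` at `0`, so by Riemann's removable singularity theorem `f` would have a limit
at `0`. Then `log |z|² = g - f` would be bounded near `0`, but it tends to `-∞`.
-/

open Complex Metric Set Filter Asymptotics Topology

theorem tendsto_log_norm_sub_nhdsNE_atBot {E : Type*} [NormedAddCommGroup E] (c : E) :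
    Tendsto (fun z => Real.log ‖z - c‖) (𝓝[≠] c) atBot :=
  Real.tendsto_log_nhdsGT_zero.comp (tendsto_norm_sub_self_nhdsNE c)

theorem isLittleO_one_log_norm_sub_nhdsNE {E : Type*} [NormedAddCommGroup E] (c : E) :
    (fun _ => (1 : ℝ)) =o[𝓝[≠] c] fun z => Real.log ‖z - c‖ :=
  (isLittleO_one_left_iff ℝ).2 <|
    tendsto_abs_atBot_atTop.comp (tendsto_log_norm_sub_nhdsNE_atBot c)

theorem isLittleO_log_norm_sub_inv_nhdsNE {𝕜 : Type*} [NormedDivisionRing 𝕜] (c : 𝕜) :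
    (fun z => Real.log ‖z - c‖) =o[𝓝[≠] c] fun z => (z - c)⁻¹ := by
  have h := (isLittleO_log_rpow_nhdsGT_zero (r := -1) (by norm_num)).comp_tendsto
    (tendsto_norm_sub_self_nhdsNE c)
  simpa only [Function.comp_def, Real.rpow_neg_one, ← norm_inv, isLittleO_norm_right] using h

theorem Complex.tendsto_limUnder_of_differentiable_on_punctured_nhds_of_isBigO_log
    {E : Type*} [NormedAddCommGroup E] [NormedSpace ℂ E] [CompleteSpace E] {f : ℂ → E} {c : ℂ}
    (hd : ∀ᶠ z in 𝓝[≠] c, DifferentiableAt ℂ f z)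
    (hf : f =O[𝓝[≠] c] fun z => Real.log ‖z - c‖) :
    Tendsto f (𝓝[≠] c) (𝓝 <| limUnder (𝓝[≠] c) f) := by
  have hfc : (fun _ => f c) =O[𝓝[≠] c] fun z => Real.log ‖z - c‖ :=
    ((isBigO_const_one ℝ (f c) _).trans_isLittleO (isLittleO_one_log_norm_sub_nhdsNE c)).isBigO
  exact tendsto_limUnder_of_differentiable_on_punctured_nhds_of_isLittleO hd
    ((hf.sub hfc).trans_isLittleO (isLittleO_log_norm_sub_inv_nhdsNE c))

theorem isTheta_log_norm_sq_nhdsNE_zero :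
    (fun z : ℂ => (Real.log (‖z‖ ^ 2) : ℂ)) =Θ[𝓝[≠] 0] fun z => Real.log ‖z - 0‖ := by
  simp only [sub_zero, Real.log_pow, Nat.cast_ofNat, ofReal_mul, ofReal_ofNat]
  refine (isTheta_const_mul_left two_ne_zero).2 (IsTheta.of_norm_eventuallyEq_norm ?_)
  exact .of_forall fun z => by simp

/-- There is no bounded function `g` on a punctured disk around `0` such that
`g(z) - log |z|²` is holomorphic on the punctured disk. -/
theorem no_bounded_log_correction (r : ℝ) (hr : 0 < r) :
    ¬ ∃ (g : ℂ → ℂ) (C : ℝ),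
        (∀ z ∈ ball (0 : ℂ) r \ {0}, ‖g z‖ ≤ C) ∧
        DifferentiableOn ℂ (fun z => g z - (Real.log (‖z‖ ^ 2) : ℂ))
          (ball (0 : ℂ) r \ {0}) := by
  rintro ⟨g, C, hC, hd⟩
  have hU : ball (0 : ℂ) r \ {0} ∈ 𝓝[≠] 0 := sdiff_mem_nhdsWithin_compl (ball_mem_nhds 0 hr) _
  have hg : g =O[𝓝[≠] 0] fun _ => (1 : ℝ) :=
    (isBigO_one_iff ℝ).2 ⟨C, eventually_map.2 (eventually_of_mem hU hC)⟩
  have hlim := tendsto_limUnder_of_differentiable_on_punctured_nhds_of_isBigO_log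
    (eventually_of_mem hU fun z hz =>
      hd.differentiableAt ((isOpen_ball.sdiff isClosed_singleton).mem_nhds hz))
    ((hg.trans_isLittleO (isLittleO_one_log_norm_sub_nhdsNE 0)).isBigO.sub
      isTheta_log_norm_sq_nhdsNE_zero.isBigO)
  have hbdd : (fun z : ℂ => (Real.log (‖z‖ ^ 2) : ℂ)) =O[𝓝[≠] 0] fun _ => (1 : ℝ) := by
    simpa only [sub_sub_cancel] using hg.sub (hlim.isBigO_one ℝ)
  exact (isLittleO_one_log_norm_sub_nhdsNE (0 : ℂ)).not_isBigO
    (.of_forall fun _ => one_ne_zero) (isTheta_log_norm_sq_nhdsNE_zero.symm.trans_isBigO hbdd)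
end

section
/- Let g be a hyperbolic metric (curvature −1) on a Riemann surface, let μ be a harmonic Beltrami differential with μ = ∂_{z̄} a^z where a^z = −(1/g) ∂²_{s z̄} log g(z,s), and let χ = g_{ss̄} − g |a^z|² where g_{ss̄} = ∂²_{s s̄} log g. Then χ satisfies the elliptic equation (−Δ_g + id) χ = |μ|², where Δ_g = (1/g) ∂_z ∂_{z̄} is the complex Laplacian. -/
open Complex Set

/-- Wirtinger derivative `∂/∂z` in the first (fiber) variable. -/
noncomputable def dz1 (F : ℂ × ℂ → ℂ) (p : ℂ × ℂ) : ℂ :=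
  (fderiv ℝ F p (1, 0) - Complex.I * fderiv ℝ F p (Complex.I, 0)) / 2

/-- Wirtinger derivative `∂/∂z̄` in the first (fiber) variable. -/
noncomputable def dzb1 (F : ℂ × ℂ → ℂ) (p : ℂ × ℂ) : ℂ :=
  (fderiv ℝ F p (1, 0) + Complex.I * fderiv ℝ F p (Complex.I, 0)) / 2

/-- Wirtinger derivative `∂/∂s` in the second (base) variable. -/
noncomputable def ds1 (F : ℂ × ℂ → ℂ) (p : ℂ × ℂ) : ℂ :=
  (fderiv ℝ F p (0, 1) - Complex.I * fderiv ℝ F p (0, Complex.I)) / 2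

/-- Wirtinger derivative `∂/∂s̄` in the second (base) variable. -/
noncomputable def dsb1 (F : ℂ × ℂ → ℂ) (p : ℂ × ℂ) : ℂ :=
  (fderiv ℝ F p (0, 1) + Complex.I * fderiv ℝ F p (0, Complex.I)) / 2

/-- The (complexified) logarithm of a family of conformal factors `g(z,s)`. -/
noncomputable def LogC (g : ℂ × ℂ → ℝ) : ℂ × ℂ → ℂ := fun p => (Real.log (g p) : ℂ)

/-- The coefficient `a^z = -(1/g) ∂²_{s z̄} log g` of the horizontal lift. -/
noncomputable def Az (g : ℂ × ℂ → ℝ) : ℂ × ℂ → ℂ :=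
  fun p => -(ds1 (fun q => dzb1 (LogC g) q) p) / (g p : ℂ)

/-- The harmonic Beltrami differential `μ = ∂_z̄ a^z`. -/
noncomputable def MuB (g : ℂ × ℂ → ℝ) : ℂ × ℂ → ℂ := fun p => dzb1 (Az g) p

/-- The function `χ = g_{s s̄} - g |a^z|²`. -/
noncomputable def ChiF (g : ℂ × ℂ → ℝ) : ℂ × ℂ → ℂ :=
  fun p => ds1 (fun q => dsb1 (LogC g) q) p - (g p : ℂ) * (Complex.normSq (Az g p) : ℂ)

namespace ChiAux

/-- Generic Wirtinger-type operator. -/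
noncomputable def wirt (v₁ v₂ : ℂ × ℂ) (c : ℂ) (F : ℂ × ℂ → ℂ) (p : ℂ × ℂ) : ℂ :=
  (fderiv ℝ F p v₁ + c * fderiv ℝ F p v₂) / 2

noncomputable def Zw : (ℂ × ℂ → ℂ) → ℂ × ℂ → ℂ := wirt (1, 0) (Complex.I, 0) (-Complex.I)
noncomputable def Ww : (ℂ × ℂ → ℂ) → ℂ × ℂ → ℂ := wirt (1, 0) (Complex.I, 0) Complex.I
noncomputable def Sw : (ℂ × ℂ → ℂ) → ℂ × ℂ → ℂ := wirt (0, 1) (0, Complex.I) (-Complex.I)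
noncomputable def Tw : (ℂ × ℂ → ℂ) → ℂ × ℂ → ℂ := wirt (0, 1) (0, Complex.I) Complex.I

lemma dz1_wirt (F : ℂ × ℂ → ℂ) : dz1 F = Zw F := by
  funext p; simp only [dz1, Zw, wirt]; ring

lemma dzb1_wirt (F : ℂ × ℂ → ℂ) : dzb1 F = Ww F := by
  funext p; simp only [dzb1, Ww, wirt]

lemma ds1_wirt (F : ℂ × ℂ → ℂ) : ds1 F = Sw F := by
  funext p; simp only [ds1, Sw, wirt]; ring

lemma dsb1_wirt (F : ℂ × ℂ → ℂ) : dsb1 F = Tw F := by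
  funext p; simp only [dsb1, Tw, wirt]

lemma Zw_wirt (F : ℂ × ℂ → ℂ) (p : ℂ × ℂ) :
    Zw F p = wirt (1, 0) (Complex.I, 0) (-Complex.I) F p := rfl

lemma Ww_wirt (F : ℂ × ℂ → ℂ) (p : ℂ × ℂ) :
    Ww F p = wirt (1, 0) (Complex.I, 0) Complex.I F p := rfl

lemma Sw_wirt (F : ℂ × ℂ → ℂ) (p : ℂ × ℂ) :
    Sw F p = wirt (0, 1) (0, Complex.I) (-Complex.I) F p := rfl

lemma Tw_wirt (F : ℂ × ℂ → ℂ) (p : ℂ × ℂ) :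
    Tw F p = wirt (0, 1) (0, Complex.I) Complex.I F p := rfl

section Toolkit

variable {Ω : Set (ℂ × ℂ)} {F G : ℂ × ℂ → ℂ} {p : ℂ × ℂ} {v₁ v₂ : ℂ × ℂ} {c : ℂ}

lemma diffAt (hΩ : IsOpen Ω) (hF : ContDiffOn ℝ (⊤ : ℕ∞) F Ω) (hp : p ∈ Ω) :
    DifferentiableAt ℝ F p :=
  (hF.contDiffAt (hΩ.mem_nhds hp)).differentiableAt (by simp)

lemma evEq (hΩ : IsOpen Ω) (hp : p ∈ Ω) (h : ∀ q ∈ Ω, F q = G q) : F =ᶠ[nhds p] G :=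
  Filter.eventuallyEq_of_mem (hΩ.mem_nhds hp) h

lemma wirt_congr (h : F =ᶠ[nhds p] G) : wirt v₁ v₂ c F p = wirt v₁ v₂ c G p := by
  unfold wirt; rw [h.fderiv_eq]

lemma fderiv_apply_conj (F : ℂ × ℂ → ℂ) (p v : ℂ × ℂ) :
    fderiv ℝ (fun q => (starRingEnd ℂ) (F q)) p v = (starRingEnd ℂ) (fderiv ℝ F p v) := by
  have h : (fun q => (starRingEnd ℂ) (F q)) = (fun q => star (F q)) := rfl
  rw [h, fderiv_star]
  rfl

lemma wirt_conj (F : ℂ × ℂ → ℂ) (p : ℂ × ℂ) :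
    (starRingEnd ℂ) (wirt v₁ v₂ c F p)
      = wirt v₁ v₂ ((starRingEnd ℂ) c) (fun q => (starRingEnd ℂ) (F q)) p := by
  unfold wirt
  rw [map_div₀, map_add, map_mul, fderiv_apply_conj, fderiv_apply_conj, map_ofNat]

lemma wirt_add (hF : DifferentiableAt ℝ F p) (hG : DifferentiableAt ℝ G p) :
    wirt v₁ v₂ c (fun q => F q + G q) p = wirt v₁ v₂ c F p + wirt v₁ v₂ c G p := by
  unfold wirt; rw [fderiv_fun_add hF hG]; simp; ring

lemma wirt_sub (hF : DifferentiableAt ℝ F p) (hG : DifferentiableAt ℝ G p) :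
    wirt v₁ v₂ c (fun q => F q - G q) p = wirt v₁ v₂ c F p - wirt v₁ v₂ c G p := by
  unfold wirt; rw [fderiv_fun_sub hF hG]; simp; ring

lemma wirt_neg :
    wirt v₁ v₂ c (fun q => -F q) p = -wirt v₁ v₂ c F p := by
  unfold wirt; rw [fderiv_fun_neg]; simp; ring

lemma wirt_mul (hF : DifferentiableAt ℝ F p) (hG : DifferentiableAt ℝ G p) :
    wirt v₁ v₂ c (fun q => F q * G q) p
      = F p * wirt v₁ v₂ c G p + G p * wirt v₁ v₂ c F p := by
  unfold wirt; rw [fderiv_fun_mul hF hG]; simp [smul_eq_mul]; ring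

lemma wirt_inv (hF : DifferentiableAt ℝ F p) (h0 : F p ≠ 0) :
    wirt v₁ v₂ c (fun q => (F q)⁻¹) p
      = -((F p)⁻¹ * wirt v₁ v₂ c F p * (F p)⁻¹) := by
  have h := ((hasFDerivAt_inv' (𝕜 := ℝ) h0).comp p hF.hasFDerivAt).fderiv
  have e : (fun q => (F q)⁻¹) = (Inv.inv ∘ F) := rfl
  unfold wirt
  rw [e, h]
  simp only [ContinuousLinearMap.comp_apply, ContinuousLinearMap.neg_apply,
    ContinuousLinearMap.mulLeftRight_apply]
  ring

lemma wirt_cexp (hF : DifferentiableAt ℝ F p) :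
    wirt v₁ v₂ c (fun q => Complex.exp (F q)) p
      = Complex.exp (F p) * wirt v₁ v₂ c F p := by
  have h := (hF.hasFDerivAt.cexp).fderiv
  unfold wirt
  rw [h]
  simp only [ContinuousLinearMap.smul_apply, smul_eq_mul]
  ring

lemma wirt_smooth (hΩ : IsOpen Ω) (hF : ContDiffOn ℝ (⊤ : ℕ∞) F Ω) :
    ContDiffOn ℝ (⊤ : ℕ∞) (wirt v₁ v₂ c F) Ω := by
  have h1 : ContDiffOn ℝ (⊤ : ℕ∞) (fderiv ℝ F) Ω := hF.fderiv_of_isOpen hΩ (by simp)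
  have h2 : ∀ v, ContDiffOn ℝ (⊤ : ℕ∞) (fun q => fderiv ℝ F q v) Ω := fun v =>
    h1.clm_apply contDiffOn_const
  exact ((h2 v₁).add (contDiffOn_const.mul (h2 v₂))).div_const 2

lemma pd_diff (hΩ : IsOpen Ω) (hF : ContDiffOn ℝ (⊤ : ℕ∞) F Ω) (hp : p ∈ Ω) (v : ℂ × ℂ) :
    DifferentiableAt ℝ (fun q => fderiv ℝ F q v) p := by
  have h1 : ContDiffOn ℝ (⊤ : ℕ∞) (fderiv ℝ F) Ω := hF.fderiv_of_isOpen hΩ (by simp)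
  exact ((h1.contDiffAt (hΩ.mem_nhds hp)).differentiableAt (by simp)).clm_apply
    (differentiableAt_const v)

lemma pd_comb {A B : ℂ × ℂ → ℂ} (d : ℂ) (hA : DifferentiableAt ℝ A p)
    (hB : DifferentiableAt ℝ B p) (v : ℂ × ℂ) :
    fderiv ℝ (fun q => (A q + d * B q) / 2) p v
      = (fderiv ℝ A p v + d * fderiv ℝ B p v) / 2 := by
  have h1 : DifferentiableAt ℝ (fun q => d * B q) p := hB.const_mul d
  have e : (fun q => (A q + d * B q) / 2) = (fun q => (2 : ℂ)⁻¹ * (A q + d * B q)) := by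
    funext q; ring
  rw [e, fderiv_const_mul (hA.fun_add h1), fderiv_fun_add hA h1, fderiv_const_mul hB]
  simp only [ContinuousLinearMap.smul_apply, ContinuousLinearMap.add_apply, smul_eq_mul]
  ring

lemma pd_comm (hΩ : IsOpen Ω) (hF : ContDiffOn ℝ (⊤ : ℕ∞) F Ω) (hp : p ∈ Ω) (v w : ℂ × ℂ) :
    fderiv ℝ (fun q => fderiv ℝ F q w) p v = fderiv ℝ (fun q => fderiv ℝ F q v) p w := by
  have hd' : ContDiffOn ℝ (⊤ : ℕ∞) (fderiv ℝ F) Ω := hF.fderiv_of_isOpen hΩ (by simp)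
  have hdd : DifferentiableAt ℝ (fderiv ℝ F) p :=
    (hd'.contDiffAt (hΩ.mem_nhds hp)).differentiableAt (by simp)
  have hev : ∀ᶠ y in nhds p, HasFDerivAt F (fderiv ℝ F y) y := by
    filter_upwards [hΩ.mem_nhds hp] with y hy
    exact ((hF.contDiffAt (hΩ.mem_nhds hy)).differentiableAt (by simp)).hasFDerivAt
  have hsym := second_derivative_symmetric_of_eventually hev hdd.hasFDerivAt v w
  rw [fderiv_clm_apply hdd (differentiableAt_const w),
    fderiv_clm_apply hdd (differentiableAt_const v)]
  simpa using hsym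

lemma wirt_comm (hΩ : IsOpen Ω) (hF : ContDiffOn ℝ (⊤ : ℕ∞) F Ω) (hp : p ∈ Ω)
    (a₁ a₂ b₁ b₂ : ℂ × ℂ) (c d : ℂ) :
    wirt a₁ a₂ c (wirt b₁ b₂ d F) p = wirt b₁ b₂ d (wirt a₁ a₂ c F) p := by
  have h1 := pd_diff hΩ hF hp
  have e1 : wirt b₁ b₂ d F
      = fun q => ((fun r => fderiv ℝ F r b₁) q + d * (fun r => fderiv ℝ F r b₂) q) / 2 := rfl
  have e2 : wirt a₁ a₂ c F
      = fun q => ((fun r => fderiv ℝ F r a₁) q + c * (fun r => fderiv ℝ F r a₂) q) / 2 := rfl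
  show (fderiv ℝ (wirt b₁ b₂ d F) p a₁ + c * fderiv ℝ (wirt b₁ b₂ d F) p a₂) / 2
      = (fderiv ℝ (wirt a₁ a₂ c F) p b₁ + d * fderiv ℝ (wirt a₁ a₂ c F) p b₂) / 2
  rw [e1, e2, pd_comb d (h1 b₁) (h1 b₂) a₁, pd_comb d (h1 b₁) (h1 b₂) a₂,
    pd_comb c (h1 a₁) (h1 a₂) b₁, pd_comb c (h1 a₁) (h1 a₂) b₂,
    pd_comm hΩ hF hp a₁ b₁, pd_comm hΩ hF hp a₂ b₁, pd_comm hΩ hF hp a₁ b₂,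
    pd_comm hΩ hF hp a₂ b₂]
  ring

end Toolkit

section Atoms

variable (g : ℂ × ℂ → ℝ)

noncomputable def gC : ℂ × ℂ → ℂ := fun p => (g p : ℂ)
noncomputable def gI : ℂ × ℂ → ℂ := fun p => ((g p : ℂ))⁻¹
noncomputable def vz : ℂ × ℂ → ℂ := Zw (LogC g)
noncomputable def vw : ℂ × ℂ → ℂ := Ww (LogC g)
noncomputable def vs : ℂ × ℂ → ℂ := Sw (LogC g)
noncomputable def vt : ℂ × ℂ → ℂ := Tw (LogC g)
noncomputable def vsw : ℂ × ℂ → ℂ := Sw (vw g)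
noncomputable def vtz : ℂ × ℂ → ℂ := Tw (vz g)
noncomputable def vst : ℂ × ℂ → ℂ := Sw (vt g)
noncomputable def vsww : ℂ × ℂ → ℂ := Ww (vsw g)
noncomputable def vtzz : ℂ × ℂ → ℂ := Zw (vtz g)
noncomputable def vstw : ℂ × ℂ → ℂ := Ww (vst g)

end Atoms

section Main

variable {Ω : Set (ℂ × ℂ)} {g : ℂ × ℂ → ℝ} {p : ℂ × ℂ}

lemma gC_eq (hgpos : ∀ p ∈ Ω, 0 < g p) : ∀ q ∈ Ω, gC g q = Complex.exp (LogC g q) := by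
  intro q hq
  simp only [gC, LogC]
  rw [← Complex.ofReal_exp, Real.exp_log (hgpos q hq)]

lemma gC_smooth (hg : ContDiffOn ℝ (⊤ : ℕ∞) (LogC g) Ω) (hgpos : ∀ p ∈ Ω, 0 < g p) :
    ContDiffOn ℝ (⊤ : ℕ∞) (gC g) Ω :=
  (Complex.contDiff_exp.comp_contDiffOn hg).congr fun q hq => gC_eq hgpos q hq

lemma gC_ne (hgpos : ∀ p ∈ Ω, 0 < g p) (hp : p ∈ Ω) : gC g p ≠ 0 := by
  simpa [gC] using (hgpos p hp).ne'

lemma gI_smooth (hg : ContDiffOn ℝ (⊤ : ℕ∞) (LogC g) Ω) (hgpos : ∀ p ∈ Ω, 0 < g p) :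
    ContDiffOn ℝ (⊤ : ℕ∞) (gI g) Ω :=
  (gC_smooth hg hgpos).inv fun _ hq => gC_ne hgpos hq

lemma wirt_gC (hΩ : IsOpen Ω) (hg : ContDiffOn ℝ (⊤ : ℕ∞) (LogC g) Ω)
    (hgpos : ∀ p ∈ Ω, 0 < g p) (hp : p ∈ Ω) (v₁ v₂ : ℂ × ℂ) (c : ℂ) :
    wirt v₁ v₂ c (gC g) p = gC g p * wirt v₁ v₂ c (LogC g) p := by
  rw [wirt_congr (evEq hΩ hp (gC_eq hgpos)), wirt_cexp (diffAt hΩ hg hp),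
    ← gC_eq hgpos p hp]

lemma wirt_gI (hΩ : IsOpen Ω) (hg : ContDiffOn ℝ (⊤ : ℕ∞) (LogC g) Ω)
    (hgpos : ∀ p ∈ Ω, 0 < g p) (hp : p ∈ Ω) (v₁ v₂ : ℂ × ℂ) (c : ℂ) :
    wirt v₁ v₂ c (gI g) p = -(wirt v₁ v₂ c (LogC g) p) * gI g p := by
  have h0 : gC g p ≠ 0 := gC_ne hgpos hp
  have e : wirt v₁ v₂ c (gI g) p = wirt v₁ v₂ c (fun q => (gC g q)⁻¹) p := rfl
  rw [e, wirt_inv (diffAt hΩ (gC_smooth hg hgpos) hp) h0,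
    wirt_gC hΩ hg hgpos hp, show gI g p = (gC g p)⁻¹ from rfl]
  field_simp

lemma hZvw (hhyp : ∀ p ∈ Ω, dz1 (fun q => dzb1 (LogC g) q) p = (g p : ℂ)) :
    ∀ q ∈ Ω, Zw (vw g) q = gC g q := by
  intro q hq
  have h := hhyp q hq
  rwa [show (fun r => dzb1 (LogC g) r) = dzb1 (LogC g) from rfl, dzb1_wirt, dz1_wirt] at h

lemma hWvz (hΩ : IsOpen Ω) (hg : ContDiffOn ℝ (⊤ : ℕ∞) (LogC g) Ω)
    (hhyp : ∀ p ∈ Ω, dz1 (fun q => dzb1 (LogC g) q) p = (g p : ℂ)) :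
    ∀ q ∈ Ω, Ww (vz g) q = gC g q := by
  intro q hq
  have h : Ww (Zw (LogC g)) q = Zw (Ww (LogC g)) q := wirt_comm hΩ hg hq _ _ _ _ _ _
  show Ww (Zw (LogC g)) q = _
  rw [h]
  exact hZvw hhyp q hq

lemma hZvt (hΩ : IsOpen Ω) (hg : ContDiffOn ℝ (⊤ : ℕ∞) (LogC g) Ω) :
    ∀ q ∈ Ω, Zw (vt g) q = vtz g q := by
  intro q hq
  exact wirt_comm hΩ hg hq _ _ _ _ _ _

lemma hWvs (hΩ : IsOpen Ω) (hg : ContDiffOn ℝ (⊤ : ℕ∞) (LogC g) Ω) :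
    ∀ q ∈ Ω, Ww (vs g) q = vsw g q := by
  intro q hq
  exact wirt_comm hΩ hg hq _ _ _ _ _ _

lemma hWvtz (hΩ : IsOpen Ω) (hg : ContDiffOn ℝ (⊤ : ℕ∞) (LogC g) Ω)
    (hgpos : ∀ p ∈ Ω, 0 < g p)
    (hhyp : ∀ p ∈ Ω, dz1 (fun q => dzb1 (LogC g) q) p = (g p : ℂ)) :
    ∀ q ∈ Ω, Ww (vtz g) q = gC g q * vt g q := by
  intro q hq
  have hvz : ContDiffOn ℝ (⊤ : ℕ∞) (vz g) Ω := wirt_smooth hΩ hg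
  have h1 : Ww (Tw (vz g)) q = Tw (Ww (vz g)) q := wirt_comm hΩ hvz hq _ _ _ _ _ _
  have h2 : Tw (Ww (vz g)) q = Tw (gC g) q :=
    wirt_congr (evEq hΩ hq (hWvz hΩ hg hhyp))
  show Ww (Tw (vz g)) q = _
  rw [h1, h2]
  exact wirt_gC hΩ hg hgpos hq _ _ _

lemma hZvsw (hΩ : IsOpen Ω) (hg : ContDiffOn ℝ (⊤ : ℕ∞) (LogC g) Ω)
    (hgpos : ∀ p ∈ Ω, 0 < g p)
    (hhyp : ∀ p ∈ Ω, dz1 (fun q => dzb1 (LogC g) q) p = (g p : ℂ)) :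
    ∀ q ∈ Ω, Zw (vsw g) q = gC g q * vs g q := by
  intro q hq
  have hvw : ContDiffOn ℝ (⊤ : ℕ∞) (vw g) Ω := wirt_smooth hΩ hg
  have h1 : Zw (Sw (vw g)) q = Sw (Zw (vw g)) q := wirt_comm hΩ hvw hq _ _ _ _ _ _
  have h2 : Sw (Zw (vw g)) q = Sw (gC g) q :=
    wirt_congr (evEq hΩ hq (hZvw hhyp))
  show Zw (Sw (vw g)) q = _
  rw [h1, h2]
  exact wirt_gC hΩ hg hgpos hq _ _ _

lemma hZvsww (hΩ : IsOpen Ω) (hg : ContDiffOn ℝ (⊤ : ℕ∞) (LogC g) Ω)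
    (hgpos : ∀ p ∈ Ω, 0 < g p)
    (hhyp : ∀ p ∈ Ω, dz1 (fun q => dzb1 (LogC g) q) p = (g p : ℂ)) :
    ∀ q ∈ Ω, Zw (vsww g) q = gC g q * (vs g q * vw g q + vsw g q) := by
  intro q hq
  have hvsw : ContDiffOn ℝ (⊤ : ℕ∞) (vsw g) Ω := wirt_smooth hΩ (wirt_smooth hΩ hg)
  have h1 : Zw (Ww (vsw g)) q = Ww (Zw (vsw g)) q := wirt_comm hΩ hvsw hq _ _ _ _ _ _
  have h2 : Ww (Zw (vsw g)) q = Ww (fun r => gC g r * vs g r) q :=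
    wirt_congr (evEq hΩ hq (hZvsw hΩ hg hgpos hhyp))
  have hdgC : DifferentiableAt ℝ (gC g) q := diffAt hΩ (gC_smooth hg hgpos) hq
  have hdvs : DifferentiableAt ℝ (vs g) q := diffAt hΩ (wirt_smooth hΩ hg) hq
  show Zw (Ww (vsw g)) q = _
  rw [h1, h2, Ww_wirt, wirt_mul hdgC hdvs]
  rw [show wirt (1, 0) (Complex.I, 0) Complex.I (vs g) q = vsw g q from hWvs hΩ hg q hq,
    show wirt (1, 0) (Complex.I, 0) Complex.I (gC g) q
      = gC g q * wirt (1, 0) (Complex.I, 0) Complex.I (LogC g) q from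
        wirt_gC hΩ hg hgpos hq _ _ _,
    show wirt (1, 0) (Complex.I, 0) Complex.I (LogC g) q = vw g q from rfl]
  ring

lemma hZvstw (hΩ : IsOpen Ω) (hg : ContDiffOn ℝ (⊤ : ℕ∞) (LogC g) Ω)
    (hgpos : ∀ p ∈ Ω, 0 < g p)
    (hhyp : ∀ p ∈ Ω, dz1 (fun q => dzb1 (LogC g) q) p = (g p : ℂ)) :
    ∀ q ∈ Ω, Zw (vstw g) q = gC g q * (vs g q * vt g q + vst g q) := by
  intro q hq
  have hvt : ContDiffOn ℝ (⊤ : ℕ∞) (vt g) Ω := wirt_smooth hΩ hg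
  have hvst : ContDiffOn ℝ (⊤ : ℕ∞) (vst g) Ω := wirt_smooth hΩ hvt
  have hvz : ContDiffOn ℝ (⊤ : ℕ∞) (vz g) Ω := wirt_smooth hΩ hg
  have hvtz : ContDiffOn ℝ (⊤ : ℕ∞) (vtz g) Ω := wirt_smooth hΩ hvz
  have h1 : Zw (Ww (vst g)) q = Ww (Zw (vst g)) q := wirt_comm hΩ hvst hq _ _ _ _ _ _
  have h2 : ∀ r ∈ Ω, Zw (vst g) r = Sw (vtz g) r := by
    intro r hr
    have ha : Zw (Sw (vt g)) r = Sw (Zw (vt g)) r := wirt_comm hΩ hvt hr _ _ _ _ _ _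
    have hb : Sw (Zw (vt g)) r = Sw (vtz g) r :=
      wirt_congr (evEq hΩ hr (hZvt hΩ hg))
    show Zw (Sw (vt g)) r = _
    rw [ha, hb]
  have h3 : Ww (Zw (vst g)) q = Ww (Sw (vtz g)) q :=
    wirt_congr (evEq hΩ hq h2)
  have h4 : Ww (Sw (vtz g)) q = Sw (Ww (vtz g)) q := wirt_comm hΩ hvtz hq _ _ _ _ _ _
  have h5 : Sw (Ww (vtz g)) q = Sw (fun r => gC g r * vt g r) q :=
    wirt_congr (evEq hΩ hq (hWvtz hΩ hg hgpos hhyp))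
  have hdgC : DifferentiableAt ℝ (gC g) q := diffAt hΩ (gC_smooth hg hgpos) hq
  have hdvt : DifferentiableAt ℝ (vt g) q := diffAt hΩ hvt hq
  show Zw (Ww (vst g)) q = _
  rw [h1, h3, h4, h5, Sw_wirt, wirt_mul hdgC hdvt]
  rw [show wirt (0, 1) (0, Complex.I) (-Complex.I) (vt g) q = vst g q from rfl,
    show wirt (0, 1) (0, Complex.I) (-Complex.I) (gC g) q
      = gC g q * wirt (0, 1) (0, Complex.I) (-Complex.I) (LogC g) q from
        wirt_gC hΩ hg hgpos hq _ _ _,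
    show wirt (0, 1) (0, Complex.I) (-Complex.I) (LogC g) q = vs g q from rfl]
  ring

lemma az_eq : Az g = fun q => -vsw g q * gI g q := by
  funext q
  show -(ds1 (fun r => dzb1 (LogC g) r) q) / (g q : ℂ) = _
  rw [show (fun r => dzb1 (LogC g) r) = dzb1 (LogC g) from rfl, dzb1_wirt, ds1_wirt,
    div_eq_mul_inv]
  rfl

lemma conj_logC : (fun q => (starRingEnd ℂ) (LogC g q)) = LogC g := by
  funext q; simp [LogC]

lemma conj_vw : (fun q => (starRingEnd ℂ) (vw g q)) = vz g := by
  funext q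
  show (starRingEnd ℂ) (wirt (1, 0) (Complex.I, 0) Complex.I (LogC g) q) = _
  rw [wirt_conj, conj_logC, Complex.conj_I]
  rfl

lemma conj_vsw : (fun q => (starRingEnd ℂ) (vsw g q)) = vtz g := by
  funext q
  show (starRingEnd ℂ) (wirt (0, 1) (0, Complex.I) (-Complex.I) (vw g) q) = _
  rw [wirt_conj, conj_vw, map_neg, Complex.conj_I, neg_neg]
  rfl

lemma conj_gI : (fun q => (starRingEnd ℂ) (gI g q)) = gI g := by
  funext q
  simp [gI, map_inv₀]

lemma conj_az : (fun q => (starRingEnd ℂ) (Az g q)) = fun q => -vtz g q * gI g q := by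
  funext q
  rw [az_eq]
  simp only [map_mul, map_neg]
  rw [show (starRingEnd ℂ) (vsw g q) = vtz g q from congrFun (conj_vsw (g := g)) q,
    show (starRingEnd ℂ) (gI g q) = gI g q from congrFun (conj_gI (g := g)) q]

lemma mu_eq (hΩ : IsOpen Ω) (hg : ContDiffOn ℝ (⊤ : ℕ∞) (LogC g) Ω)
    (hgpos : ∀ p ∈ Ω, 0 < g p) (hp : p ∈ Ω) :
    MuB g p = (vsw g p * vw g p - vsww g p) * gI g p := by
  have hdvsw : DifferentiableAt ℝ (fun r => -vsw g r) p :=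
    (diffAt hΩ (wirt_smooth hΩ (wirt_smooth hΩ hg)) hp).neg
  have hdgI : DifferentiableAt ℝ (gI g) p := diffAt hΩ (gI_smooth hg hgpos) hp
  have e1 : MuB g = Ww (Az g) := by
    funext r; show dzb1 (Az g) r = _; rw [dzb1_wirt]
  rw [e1, az_eq, Ww_wirt, wirt_mul hdvsw hdgI, wirt_neg,
    show wirt (1, 0) (Complex.I, 0) Complex.I (vsw g) p = vsww g p from rfl,
    show wirt (1, 0) (Complex.I, 0) Complex.I (gI g) p
      = -(wirt (1, 0) (Complex.I, 0) Complex.I (LogC g) p) * gI g p from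
        wirt_gI hΩ hg hgpos hp _ _ _,
    show wirt (1, 0) (Complex.I, 0) Complex.I (LogC g) p = vw g p from rfl]
  ring

lemma conj_mu (hΩ : IsOpen Ω) (hg : ContDiffOn ℝ (⊤ : ℕ∞) (LogC g) Ω)
    (hgpos : ∀ p ∈ Ω, 0 < g p) (hp : p ∈ Ω) :
    (starRingEnd ℂ) (MuB g p) = (vtz g p * vz g p - vtzz g p) * gI g p := by
  have e1 : MuB g = Ww (Az g) := by
    funext r; show dzb1 (Az g) r = _; rw [dzb1_wirt]
  have hdvtz : DifferentiableAt ℝ (fun r => -vtz g r) p :=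
    (diffAt hΩ (wirt_smooth hΩ (wirt_smooth hΩ hg)) hp).neg
  have hdgI : DifferentiableAt ℝ (gI g) p := diffAt hΩ (gI_smooth hg hgpos) hp
  rw [e1]
  show (starRingEnd ℂ) (wirt (1, 0) (Complex.I, 0) Complex.I (Az g) p) = _
  rw [wirt_conj, conj_az, Complex.conj_I]
  show wirt (1, 0) (Complex.I, 0) (-Complex.I) (fun q => -vtz g q * gI g q) p = _
  rw [wirt_mul hdvtz hdgI, wirt_neg,
    show wirt (1, 0) (Complex.I, 0) (-Complex.I) (vtz g) p = vtzz g p from rfl,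
    show wirt (1, 0) (Complex.I, 0) (-Complex.I) (gI g) p
      = -(wirt (1, 0) (Complex.I, 0) (-Complex.I) (LogC g) p) * gI g p from
        wirt_gI hΩ hg hgpos hp _ _ _,
    show wirt (1, 0) (Complex.I, 0) (-Complex.I) (LogC g) p = vz g p from rfl]
  ring

lemma chi_eq (hΩ : IsOpen Ω) (hg : ContDiffOn ℝ (⊤ : ℕ∞) (LogC g) Ω)
    (hgpos : ∀ p ∈ Ω, 0 < g p) :
    ∀ q ∈ Ω, ChiF g q = vst g q - vsw g q * vtz g q * gI g q := by
  intro q hq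
  have hne : gC g q ≠ 0 := gC_ne hgpos hq
  have h1 : gC g q * gI g q = 1 := by
    rw [show gI g q = (gC g q)⁻¹ from rfl]
    exact mul_inv_cancel₀ hne
  show ds1 (fun r => dsb1 (LogC g) r) q - (g q : ℂ) * ((Complex.normSq (Az g q) : ℝ) : ℂ) = _
  rw [show (fun r => dsb1 (LogC g) r) = dsb1 (LogC g) from rfl, dsb1_wirt, ds1_wirt,
    ← Complex.mul_conj (Az g q),
    show (starRingEnd ℂ) (Az g q) = -vtz g q * gI g q from congrFun (conj_az (g := g)) q,
    show Az g q = -vsw g q * gI g q from congrFun (az_eq (g := g)) q,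
    show Sw (Tw (LogC g)) q = vst g q from rfl,
    show ((g q : ℝ) : ℂ) = gC g q from rfl]
  linear_combination (-(vsw g q * vtz g q * gI g q)) * h1

lemma wchi_eq (hΩ : IsOpen Ω) (hg : ContDiffOn ℝ (⊤ : ℕ∞) (LogC g) Ω)
    (hgpos : ∀ p ∈ Ω, 0 < g p)
    (hhyp : ∀ p ∈ Ω, dz1 (fun q => dzb1 (LogC g) q) p = (g p : ℂ)) :
    ∀ q ∈ Ω, Ww (ChiF g) q = vstw g q - vsw g q * vt g q
      + (vsw g q * vtz g q * vw g q - vsww g q * vtz g q) * gI g q := by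
  intro q hq
  have hdvsw : DifferentiableAt ℝ (vsw g) q :=
    diffAt hΩ (wirt_smooth hΩ (wirt_smooth hΩ hg)) hq
  have hdvtz : DifferentiableAt ℝ (vtz g) q :=
    diffAt hΩ (wirt_smooth hΩ (wirt_smooth hΩ hg)) hq
  have hdgI : DifferentiableAt ℝ (gI g) q := diffAt hΩ (gI_smooth hg hgpos) hq
  have hdvst : DifferentiableAt ℝ (vst g) q :=
    diffAt hΩ (wirt_smooth hΩ (wirt_smooth hΩ hg)) hq
  have hdm : DifferentiableAt ℝ (fun r => vsw g r * vtz g r) q := hdvsw.mul hdvtz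
  have hdm2 : DifferentiableAt ℝ (fun r => vsw g r * vtz g r * gI g r) q := hdm.mul hdgI
  have h0 : Ww (ChiF g) q = Ww (fun r => vst g r - vsw g r * vtz g r * gI g r) q :=
    wirt_congr (evEq hΩ hq (chi_eq hΩ hg hgpos))
  have hne : gC g q ≠ 0 := gC_ne hgpos hq
  have h1 : gC g q * gI g q = 1 := by
    rw [show gI g q = (gC g q)⁻¹ from rfl]
    exact mul_inv_cancel₀ hne
  rw [h0, Ww_wirt, wirt_sub hdvst hdm2, wirt_mul hdm hdgI, wirt_mul hdvsw hdvtz,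
    show wirt (1, 0) (Complex.I, 0) Complex.I (vst g) q = vstw g q from rfl,
    show wirt (1, 0) (Complex.I, 0) Complex.I (vsw g) q = vsww g q from rfl,
    show wirt (1, 0) (Complex.I, 0) Complex.I (vtz g) q = gC g q * vt g q from
      hWvtz hΩ hg hgpos hhyp q hq,
    show wirt (1, 0) (Complex.I, 0) Complex.I (gI g) q
      = -(wirt (1, 0) (Complex.I, 0) Complex.I (LogC g) q) * gI g q from
        wirt_gI hΩ hg hgpos hq _ _ _,
    show wirt (1, 0) (Complex.I, 0) Complex.I (LogC g) q = vw g q from rfl]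
  linear_combination (-(vsw g q * vt g q)) * h1

lemma main_eq (hΩ : IsOpen Ω) (hg : ContDiffOn ℝ (⊤ : ℕ∞) (LogC g) Ω)
    (hgpos : ∀ p ∈ Ω, 0 < g p)
    (hhyp : ∀ p ∈ Ω, dz1 (fun q => dzb1 (LogC g) q) p = (g p : ℂ))
    (hp : p ∈ Ω) :
    Zw (Ww (ChiF g)) p = gC g p * (ChiF g p - (Complex.normSq (MuB g p) : ℂ)) := by
  have hsm2 : ContDiffOn ℝ (⊤ : ℕ∞) (vsw g) Ω := wirt_smooth hΩ (wirt_smooth hΩ hg)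
  have hsm2' : ContDiffOn ℝ (⊤ : ℕ∞) (vtz g) Ω := wirt_smooth hΩ (wirt_smooth hΩ hg)
  have hdvsw : DifferentiableAt ℝ (vsw g) p := diffAt hΩ hsm2 hp
  have hdvtz : DifferentiableAt ℝ (vtz g) p := diffAt hΩ hsm2' hp
  have hdvw : DifferentiableAt ℝ (vw g) p := diffAt hΩ (wirt_smooth hΩ hg) hp
  have hdvt : DifferentiableAt ℝ (vt g) p := diffAt hΩ (wirt_smooth hΩ hg) hp
  have hdvsww : DifferentiableAt ℝ (vsww g) p := diffAt hΩ (wirt_smooth hΩ hsm2) hp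
  have hdvstw : DifferentiableAt ℝ (vstw g) p :=
    diffAt hΩ (wirt_smooth hΩ (wirt_smooth hΩ (wirt_smooth hΩ hg))) hp
  have hdgI : DifferentiableAt ℝ (gI g) p := diffAt hΩ (gI_smooth hg hgpos) hp
  have hdA : DifferentiableAt ℝ (fun r => vsw g r * vtz g r * vw g r) p :=
    (hdvsw.mul hdvtz).mul hdvw
  have hdB : DifferentiableAt ℝ (fun r => vsww g r * vtz g r) p := hdvsww.mul hdvtz
  have hdC : DifferentiableAt ℝ
      (fun r => vsw g r * vtz g r * vw g r - vsww g r * vtz g r) p := hdA.sub hdB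
  have hdD : DifferentiableAt ℝ
      (fun r => (vsw g r * vtz g r * vw g r - vsww g r * vtz g r) * gI g r) p :=
    hdC.mul hdgI
  have hdE : DifferentiableAt ℝ (fun r => vsw g r * vt g r) p := hdvsw.mul hdvt
  have hdF : DifferentiableAt ℝ (fun r => vstw g r - vsw g r * vt g r) p :=
    hdvstw.sub hdE
  have hne : gC g p ≠ 0 := gC_ne hgpos hp
  have h0 : Zw (Ww (ChiF g)) p
      = Zw (fun r => vstw g r - vsw g r * vt g r
        + (vsw g r * vtz g r * vw g r - vsww g r * vtz g r) * gI g r) p :=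
    wirt_congr (evEq hΩ hp (wchi_eq hΩ hg hgpos hhyp))
  rw [h0, Zw_wirt, wirt_add hdF hdD, wirt_sub hdvstw hdE, wirt_mul hdvsw hdvt,
    wirt_mul hdC hdgI, wirt_sub hdA hdB, wirt_mul (hdvsw.fun_mul hdvtz) hdvw,
    wirt_mul hdvsw hdvtz, wirt_mul hdvsww hdvtz,
    show wirt (1, 0) (Complex.I, 0) (-Complex.I) (vstw g) p
      = gC g p * (vs g p * vt g p + vst g p) from hZvstw hΩ hg hgpos hhyp p hp,
    show wirt (1, 0) (Complex.I, 0) (-Complex.I) (vt g) p = vtz g p from hZvt hΩ hg p hp,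
    show wirt (1, 0) (Complex.I, 0) (-Complex.I) (vsw g) p = gC g p * vs g p from
      hZvsw hΩ hg hgpos hhyp p hp,
    show wirt (1, 0) (Complex.I, 0) (-Complex.I) (vtz g) p = vtzz g p from rfl,
    show wirt (1, 0) (Complex.I, 0) (-Complex.I) (vw g) p = gC g p from hZvw hhyp p hp,
    show wirt (1, 0) (Complex.I, 0) (-Complex.I) (vsww g) p
      = gC g p * (vs g p * vw g p + vsw g p) from hZvsww hΩ hg hgpos hhyp p hp,
    show wirt (1, 0) (Complex.I, 0) (-Complex.I) (gI g) p
      = -(wirt (1, 0) (Complex.I, 0) (-Complex.I) (LogC g) p) * gI g p from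
        wirt_gI hΩ hg hgpos hp _ _ _,
    show wirt (1, 0) (Complex.I, 0) (-Complex.I) (LogC g) p = vz g p from rfl,
    chi_eq hΩ hg hgpos p hp, ← Complex.mul_conj (MuB g p),
    conj_mu hΩ hg hgpos hp, mu_eq hΩ hg hgpos hp,
    show gI g p = (gC g p)⁻¹ from rfl]
  field_simp
  ring

end Main

end ChiAux

/-- For a family of hyperbolic metrics `g(z,s)` (`∂z ∂z̄ log g = g` in the fiber variable),
with harmonic Beltrami differential `μ = ∂z̄ a^z`, `a^z = -(1/g) ∂²_{s z̄} log g`, the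
function `χ = g_{ss̄} - g|a^z|²` satisfies the elliptic equation `(-Δ_g + id) χ = |μ|²`,
i.e. `∂z ∂z̄ χ = g (χ - |μ|²)` where `Δ_g = (1/g) ∂z ∂z̄`. -/
theorem chi_elliptic_equation (Ω : Set (ℂ × ℂ)) (hΩ : IsOpen Ω)
    (g : ℂ × ℂ → ℝ) (hg : ContDiffOn ℝ (⊤ : ℕ∞) (LogC g) Ω) (hgpos : ∀ p ∈ Ω, 0 < g p)
    (hhyp : ∀ p ∈ Ω, dz1 (fun q => dzb1 (LogC g) q) p = (g p : ℂ))
    (hharm : ∀ p ∈ Ω,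
      dzb1 (fun q => (g q : ℂ) * (starRingEnd ℂ) (MuB g q)) p = 0) :
    ∀ p ∈ Ω, dz1 (fun q => dzb1 (ChiF g) q) p =
      (g p : ℂ) * (ChiF g p - (Complex.normSq (MuB g p) : ℂ)) := by
  intro p hp
  have h := ChiAux.main_eq hΩ hg hgpos hhyp hp
  rw [show (fun q => dzb1 (ChiF g) q) = dzb1 (ChiF g) from rfl, ChiAux.dzb1_wirt,
    ChiAux.dz1_wirt]
  exact h
end
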